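/- arXiv:2402.13662 — 8 statements merged into one kernel-verified Lean document; each statement's English description precedes it below -/
import Mathlib

section
/- Let X be a continuous random variable with PDF f and CDF F supported on (l, r), let x₀ ∈ (l, r), and let g be a continuously differentiable function with g(x) > 0 and g'(x) < 0 for all x ∈ (x₀, r). Define P(x) = -f(x) · g(x)/g'(x) and suppose P(x) → 0 as x → r. If x ↦ f(x)/(-g'(x)) is monotone decreasing on (x₀, r), then 1 - F(x) ≤ P(x) for all x ∈ (x₀, r). -/
open MeasureTheory Set Filter

/-- Theorem 1 (upper bound): for a RV supported on `(l, r)` with CDF `F` and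
continuously differentiable PDF `f`, if `g > 0`, `g' < 0` on `(x₀, r)`,
`P x = -f x * g x / g' x` tends to `0` as `x → r⁻`, and `f / (-g')` is
decreasing on `(x₀, r)`, then `1 - F x ≤ P x` on `(x₀, r)`. -/
theorem stmt_2 (μ : Measure ℝ) [IsProbabilityMeasure μ]
    (l r : EReal) (hlr : l < r)
    (F f g P : ℝ → ℝ)
    (hFdef : ∀ x, F x = (μ (Iic x)).toReal)
    (hsupp : μ {x : ℝ | ¬ (l < (x : EReal) ∧ (x : EReal) < r)} = 0)
    (hf : ∀ x : ℝ, l < (x : EReal) → (x : EReal) < r → HasDerivAt F (f x) x)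
    (hfdiff : ∀ x : ℝ, l < (x : EReal) → (x : EReal) < r → DifferentiableAt ℝ f x)
    (hfC : ContinuousOn (deriv f) {x : ℝ | l < (x : EReal) ∧ (x : EReal) < r})
    (x₀ : ℝ) (hx₀l : l < (x₀ : EReal)) (hx₀r : (x₀ : EReal) < r)
    (hgdiff : ∀ x : ℝ, x₀ < x → (x : EReal) < r → DifferentiableAt ℝ g x)
    (hgC : ContinuousOn (deriv g) {x : ℝ | x₀ < x ∧ (x : EReal) < r})
    (hgpos : ∀ x : ℝ, x₀ < x → (x : EReal) < r → 0 < g x)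
    (hg' : ∀ x : ℝ, x₀ < x → (x : EReal) < r → deriv g x < 0)
    (hP : ∀ x, P x = -f x * (g x / deriv g x))
    (hPlim : Tendsto P (comap (fun x : ℝ => (x : EReal)) (nhdsWithin r (Iio r)))
      (nhds 0))
    (hmono : AntitoneOn (fun x => f x / (-deriv g x))
      {x : ℝ | x₀ < x ∧ (x : EReal) < r}) :
    ∀ x : ℝ, x₀ < x → (x : EReal) < r → 1 - F x ≤ P x := by
  intro x hx hxr
  have hlx : l < (x : EReal) := lt_trans hx₀l (EReal.coe_lt_coe_iff.2 hx)
  have hg'x : deriv g x < 0 := hg' x hx hxr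
  have hgx : 0 < g x := hgpos x hx hxr
  have hFmono : Monotone F := by
    intro a b hab
    rw [hFdef, hFdef]
    exact ENNReal.toReal_mono (measure_ne_top μ _)
      (measure_mono (Iic_subset_Iic.2 hab))
  have hfx0 : 0 ≤ f x := by
    have hT := hasDerivAt_iff_tendsto_slope.1 (hf x hlx hxr)
    refine ge_of_tendsto hT ?_
    filter_upwards [self_mem_nhdsWithin] with y hy
    have hyx : y ≠ x := hy
    rw [slope_def_field]
    rcases lt_or_gt_of_ne hyx with h | h
    · exact div_nonneg_iff.2 (Or.inr ⟨by linarith [hFmono h.le], by linarith⟩)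
    · exact div_nonneg (by linarith [hFmono h.le]) (by linarith)
  set c := f x / (-deriv g x) with hc
  have hcpos : 0 ≤ c := div_nonneg hfx0 (by linarith)
  have hPx : P x = c * g x := by
    rw [hP, hc]
    field_simp
  have hP0 : 0 ≤ P x := hPx ▸ mul_nonneg hcpos hgx.le
  -- key bound : for y ∈ (x, r), F y - F x ≤ P x
  have key : ∀ y : ℝ, x < y → (y : EReal) < r → F y - F x ≤ P x := by
    intro y hxy hyr
    have hmemF : ∀ t ∈ Icc x y, l < (t : EReal) ∧ (t : EReal) < r := fun t ht =>
      ⟨lt_of_lt_of_le hlx (EReal.coe_le_coe_iff.2 ht.1),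
       lt_of_le_of_lt (EReal.coe_le_coe_iff.2 ht.2) hyr⟩
    have hmemg : ∀ t ∈ Icc x y, x₀ < t ∧ (t : EReal) < r := fun t ht =>
      ⟨lt_of_lt_of_le hx ht.1, lt_of_le_of_lt (EReal.coe_le_coe_iff.2 ht.2) hyr⟩
    have hdiff : ∀ t ∈ Icc x y, DifferentiableAt ℝ (fun t => c * (-g t) - F t) t :=
      fun t ht =>
        (((hgdiff t (hmemg t ht).1 (hmemg t ht).2).neg.const_mul c).sub
          (hf t (hmemF t ht).1 (hmemF t ht).2).differentiableAt)
    have hmonoh : MonotoneOn (fun t => c * (-g t) - F t) (Icc x y) := by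
      apply monotoneOn_of_deriv_nonneg (convex_Icc x y)
      · exact fun t ht => (hdiff t ht).continuousAt.continuousWithinAt
      · rw [interior_Icc]
        exact fun t ht => (hdiff t (Ioo_subset_Icc_self ht)).differentiableWithinAt
      · rw [interior_Icc]
        intro t ht
        have ht' := Ioo_subset_Icc_self ht
        have hd : HasDerivAt (fun t => c * (-g t) - F t) (c * (-(deriv g t)) - f t) t :=
          (((hgdiff t (hmemg t ht').1 (hmemg t ht').2).hasDerivAt.neg.const_mul c).sub
            (hf t (hmemF t ht').1 (hmemF t ht').2))
        rw [hd.deriv]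
        have hg't : deriv g t < 0 := hg' t (hmemg t ht').1 (hmemg t ht').2
        have hfle : f t / (-deriv g t) ≤ f x / (-deriv g x) :=
          hmono ⟨hx, hxr⟩ ⟨(hmemg t ht').1, (hmemg t ht').2⟩ ht'.1
        rw [div_le_div_iff₀ (by linarith) (by linarith)] at hfle
        have hfle' : f t ≤ c * (-deriv g t) := by
          rw [hc, div_mul_eq_mul_div, le_div_iff₀ (by linarith)]
          linarith
        linarith
    have h2 : c * (-g x) - F x ≤ c * (-g y) - F y :=
      hmonoh ⟨le_refl x, hxy.le⟩ ⟨hxy.le, le_refl y⟩ hxy.le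
    have hgy : 0 < g y := hgpos y (lt_trans hx hxy) hyr
    rw [hPx]
    nlinarith [mul_nonneg hcpos hgy.le]
  -- μ (Ioc x y) in terms of F
  have hIoc : ∀ y : ℝ, x < y → μ (Ioc x y) = ENNReal.ofReal (F y - F x) := by
    intro y hxy
    have hsplit : μ (Iic x) + μ (Ioc x y) = μ (Iic y) := by
      rw [← measure_union (Iic_disjoint_Ioc le_rfl) measurableSet_Ioc,
        Iic_union_Ioc_eq_Iic hxy.le]
    have htR : (μ (Iic x)).toReal + (μ (Ioc x y)).toReal = (μ (Iic y)).toReal := by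
      rw [← ENNReal.toReal_add (measure_ne_top μ _) (measure_ne_top μ _), hsplit]
    have : (μ (Ioc x y)).toReal = F y - F x := by
      rw [hFdef, hFdef]; linarith
    rw [← this, ENNReal.ofReal_toReal (measure_ne_top μ _)]
  -- a sequence increasing to r
  have hseq : ∃ u : ℕ → ℝ, Monotone u ∧ (∀ n, x < u n ∧ ((u n : EReal) < r)) ∧
      ∀ t : ℝ, x < t → (t : EReal) < r → ∃ n, t ≤ u n := by
    by_cases hr : r = ⊤
    · refine ⟨fun n => x + n + 1, ?_, ?_, ?_⟩
      · intro a b hab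
        have : (a : ℝ) ≤ b := Nat.cast_le.2 hab
        simp only
        linarith
      · intro n
        have : (0:ℝ) ≤ n := Nat.cast_nonneg n
        refine ⟨?_, hr ▸ EReal.coe_lt_top _⟩
        simp only
        linarith
      · intro t ht htr
        refine ⟨⌈t - x⌉₊, ?_⟩
        have := Nat.le_ceil (t - x)
        simp only
        linarith
    · have hrbot : r ≠ ⊥ := fun h => by simp [h] at hxr
      obtain ⟨b, rfl⟩ : ∃ b : ℝ, r = (b : ℝ) := ⟨r.toReal, (EReal.coe_toReal hr hrbot).symm⟩
      have hxb : x < b := EReal.coe_lt_coe_iff.1 hxr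
      refine ⟨fun n => b - (b - x) / (n + 2), ?_, ?_, ?_⟩
      · intro m n hmn
        have h2 : (m : ℝ) + 2 ≤ (n : ℝ) + 2 := by
          have : (m : ℝ) ≤ n := Nat.cast_le.2 hmn
          linarith
        have h3 : (b - x) / ((n : ℝ) + 2) ≤ (b - x) / ((m : ℝ) + 2) := by
          apply div_le_div_of_nonneg_left (by linarith) (by positivity) h2
        simp only
        linarith
      · intro n
        have h1 : (0:ℝ) < (n : ℝ) + 2 := by positivity
        constructor
        · have : (b - x) / ((n : ℝ) + 2) < b - x := by
            rw [div_lt_iff₀ h1]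
            nlinarith
          simp only
          linarith
        · rw [EReal.coe_lt_coe_iff]
          have : 0 < (b - x) / ((n : ℝ) + 2) := div_pos (by linarith) (by positivity)
          linarith
      · intro t ht htr
        have htb : t < b := EReal.coe_lt_coe_iff.1 htr
        have h1 : 0 < b - t := by linarith
        refine ⟨⌈(b - x) / (b - t)⌉₊, ?_⟩
        set n : ℕ := ⌈(b - x) / (b - t)⌉₊ with hn
        have h2 : (b - x) / (b - t) ≤ (n : ℝ) := Nat.le_ceil _
        have h3 : (0:ℝ) < (n : ℝ) + 2 := by positivity
        have h4 : b - x ≤ ((n : ℝ) + 2) * (b - t) := by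
          have := (div_le_iff₀ h1).1 (h2.trans (by linarith : (n : ℝ) ≤ (n : ℝ) + 2))
          linarith
        have h5 : (b - x) / ((n : ℝ) + 2) ≤ b - t := by
          rw [div_le_iff₀ h3]
          nlinarith
        simp only
        linarith
  obtain ⟨u, hu_mono, hu_mem, hu_cov⟩ := hseq
  set S := {t : ℝ | x < t ∧ (t : EReal) < r} with hS
  have hScup : S ⊆ ⋃ n, Ioc x (u n) := by
    rintro t ⟨ht1, ht2⟩
    obtain ⟨n, hn⟩ := hu_cov t ht1 ht2
    exact mem_iUnion.2 ⟨n, ht1, hn⟩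
  have hμS : μ S ≤ ENNReal.ofReal (P x) := by
    calc μ S ≤ μ (⋃ n, Ioc x (u n)) := measure_mono hScup
      _ = ⨆ n, μ (Ioc x (u n)) :=
          Directed.measure_iUnion (Monotone.directed_le
            (fun m n h => Ioc_subset_Ioc_right (hu_mono h)))
      _ ≤ ENNReal.ofReal (P x) := by
          refine iSup_le fun n => ?_
          rw [hIoc (u n) (hu_mem n).1]
          exact ENNReal.ofReal_le_ofReal (key (u n) (hu_mem n).1 (hu_mem n).2)
  have hIoi : μ (Ioi x) ≤ μ S := by
    have hsub : Ioi x ⊆ S ∪ {t : ℝ | ¬ (l < (t : EReal) ∧ (t : EReal) < r)} := by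
      intro t ht
      by_cases h : (t : EReal) < r
      · exact Or.inl ⟨ht, h⟩
      · exact Or.inr (fun hc => h hc.2)
    calc μ (Ioi x) ≤ μ S + μ {t : ℝ | ¬ (l < (t : EReal) ∧ (t : EReal) < r)} :=
          (measure_mono hsub).trans (measure_union_le _ _)
      _ = μ S := by rw [hsupp, add_zero]
  have h1F : 1 - F x = (μ (Ioi x)).toReal := by
    have hcompl := measure_add_measure_compl (μ := μ) (measurableSet_Iic : MeasurableSet (Iic x))
    rw [compl_Iic, measure_univ] at hcompl
    have h2 : (μ (Iic x)).toReal + (μ (Ioi x)).toReal = 1 := by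
      rw [← ENNReal.toReal_add (measure_ne_top μ _) (measure_ne_top μ _), hcompl,
        ENNReal.toReal_one]
    rw [hFdef]
    linarith
  rw [h1F]
  calc (μ (Ioi x)).toReal ≤ (μ S).toReal :=
        ENNReal.toReal_mono (by
          refine ne_top_of_le_ne_top (measure_ne_top μ univ) (measure_mono (subset_univ S))) hIoi
    _ ≤ P x := ENNReal.toReal_le_of_le_ofReal hP0 hμS
end

section
/- Let X be a continuous random variable with PDF f and CDF F supported on (l, r), let x₀ ∈ (l, r), and let g be a continuously differentiable function with g(x) > 0 and g'(x) < 0 for all x ∈ (x₀, r). Define P(x) = -f(x) · g(x)/g'(x) and suppose P(x) → 0 as x → r. If x ↦ f(x)/(-g'(x)) is monotone increasing on (x₀, r), then 1 - F(x) ≥ P(x) for all x ∈ (x₀, r). -/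
open MeasureTheory Set Filter

/-!
Put `c = f x / (-g' x)`. On `[x, y]` the function `F + c g` has derivative
`(-g') (f / (-g') - c) ≥ 0`, since `f / (-g')` is increasing, so
`F x + c g x ≤ F y + c g y ≤ 1 + P y`, the last step because `g y > 0` and `c ≤ f y / (-g' y)`.
As `c g x = P x`, this reads `P x - P y ≤ 1 - F x`; now let `y → r`.
-/

theorem monotoneOn_add_const_mul_of_le_div_neg {D : Set ℝ} (hD : Convex ℝ D)
    {F f g g' : ℝ → ℝ} {c : ℝ}
    (hF : ∀ t ∈ D, HasDerivAt F (f t) t) (hg : ∀ t ∈ D, HasDerivAt g (g' t) t)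
    (hg' : ∀ t ∈ interior D, g' t < 0) (hc : ∀ t ∈ interior D, c ≤ f t / -g' t) :
    MonotoneOn (fun t => F t + c * g t) D := by
  refine monotoneOn_of_hasDerivWithinAt_nonneg hD
    (fun t ht => ((hF t ht).continuousAt.add
      ((hg t ht).continuousAt.const_mul c)).continuousWithinAt)
    (fun t ht => ((hF t (interior_subset ht)).add
      ((hg t (interior_subset ht)).const_mul c)).hasDerivWithinAt)
    (fun t ht => ?_)
  have hct := hc t ht
  rw [le_div_iff₀ (neg_pos.2 (hg' t ht))] at hct
  linarith

theorem div_neg_mul_sub_le_sub_of_monotoneOn {D : Set ℝ} (hD : Convex ℝ D)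
    {F f g g' : ℝ → ℝ}
    (hF : ∀ t ∈ D, HasDerivAt F (f t) t) (hg : ∀ t ∈ D, HasDerivAt g (g' t) t)
    (hgpos : ∀ t ∈ D, 0 < g t) (hg' : ∀ t ∈ D, g' t < 0)
    (hmono : MonotoneOn (fun t => f t / -g' t) D)
    {x y : ℝ} (hx : x ∈ D) (hy : y ∈ D) (hxy : x ≤ y) :
    f x / -g' x * g x - f y / -g' y * g y ≤ F y - F x := by
  set c := f x / -g' x
  have hsub : Icc x y ⊆ D := hD.ordConnected.out hx hy
  have hsub' : interior (Icc x y) ⊆ D := interior_subset.trans hsub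
  have hFg : F x + c * g x ≤ F y + c * g y :=
    monotoneOn_add_const_mul_of_le_div_neg (convex_Icc x y)
      (fun t ht => hF t (hsub ht)) (fun t ht => hg t (hsub ht))
      (fun t ht => hg' t (hsub' ht))
      (fun t ht => hmono hx (hsub' ht) (interior_subset ht).1)
      (left_mem_Icc.2 hxy) (right_mem_Icc.2 hxy) hxy
  have hcy : c * g y ≤ f y / -g' y * g y :=
    mul_le_mul_of_nonneg_right (hmono hx hy hxy) (hgpos y hy).le
  linarith

theorem EReal.comap_coe_nhdsLT_neBot {r : EReal} (hr : ⊥ < r) :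
    (comap ((↑) : ℝ → EReal) (nhdsWithin r (Iio r))).NeBot :=
  ((nhdsLT_basis_of_exists_lt ⟨⊥, hr⟩).comap _).neBot_iff.2 fun hax =>
    EReal.lt_iff_exists_real_btwn.1 hax

theorem stmt_3_general (μ : Measure ℝ) [IsProbabilityMeasure μ]
    (l r : EReal)
    (F f g P : ℝ → ℝ)
    (hFdef : ∀ x, F x = (μ (Iic x)).toReal)
    (hf : ∀ x : ℝ, l < (x : EReal) → (x : EReal) < r → HasDerivAt F (f x) x)
    (x₀ : ℝ) (hx₀l : l < (x₀ : EReal))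
    (hgdiff : ∀ x : ℝ, x₀ < x → (x : EReal) < r → DifferentiableAt ℝ g x)
    (hgpos : ∀ x : ℝ, x₀ < x → (x : EReal) < r → 0 < g x)
    (hg' : ∀ x : ℝ, x₀ < x → (x : EReal) < r → deriv g x < 0)
    (hP : ∀ x, P x = -f x * (g x / deriv g x))
    (hPlim : Tendsto P (comap (fun x : ℝ => (x : EReal)) (nhdsWithin r (Iio r)))
      (nhds 0))
    (hmono : MonotoneOn (fun x => f x / (-deriv g x))
      {x : ℝ | x₀ < x ∧ (x : EReal) < r}) :
    ∀ x : ℝ, x₀ < x → (x : EReal) < r → 1 - F x ≥ P x := by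
  intro x hx₀x hxr
  set D := {t : ℝ | x₀ < t ∧ (t : EReal) < r}
  have hD : Convex ℝ D := Set.OrdConnected.convex
    ⟨fun a ha b hb t ht => ⟨ha.1.trans_le ht.1, (EReal.coe_le_coe_iff.2 ht.2).trans_lt hb.2⟩⟩
  have hPratio : ∀ t, P t = f t / -deriv g t * g t := fun t => by rw [hP]; ring
  have hstep : ∀ᶠ y in comap ((↑) : ℝ → EReal) (nhdsWithin r (Iio r)),
      P x - (1 - F x) ≤ P y := by
    filter_upwards [preimage_mem_comap (Ioo_mem_nhdsLT hxr)] with y ⟨hxy, hyr⟩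
    have hxy : x < y := EReal.coe_lt_coe_iff.1 hxy
    have hbound := div_neg_mul_sub_le_sub_of_monotoneOn hD
      (fun t ht => hf t (hx₀l.trans (EReal.coe_lt_coe_iff.2 ht.1)) ht.2)
      (fun t ht => (hgdiff t ht.1 ht.2).hasDerivAt) (fun t ht => hgpos t ht.1 ht.2)
      (fun t ht => hg' t ht.1 ht.2) hmono ⟨hx₀x, hxr⟩ ⟨hx₀x.trans hxy, hyr⟩ hxy.le
    have hFy : F y ≤ 1 := hFdef y ▸ measureReal_le_one
    rw [hPratio x, hPratio y]
    linarith
  have := EReal.comap_coe_nhdsLT_neBot ((EReal.bot_lt_coe x).trans hxr)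
  linarith [ge_of_tendsto hPlim hstep]

/-- Theorem 1 (upper bound): for a RV supported on `(l, r)` with CDF `F` and
continuously differentiable PDF `f`, if `g > 0`, `g' < 0` on `(x₀, r)`,
`P x = -f x * g x / g' x` tends to `0` as `x → r⁻`, and `f / (-g')` is
increasing on `(x₀, r)`, then `1 - F x ≥ P x` on `(x₀, r)`. -/
theorem stmt_3 (μ : Measure ℝ) [IsProbabilityMeasure μ]
    (l r : EReal) (hlr : l < r)
    (F f g P : ℝ → ℝ)
    (hFdef : ∀ x, F x = (μ (Iic x)).toReal)
    (hsupp : μ {x : ℝ | ¬ (l < (x : EReal) ∧ (x : EReal) < r)} = 0)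
    (hf : ∀ x : ℝ, l < (x : EReal) → (x : EReal) < r → HasDerivAt F (f x) x)
    (hfdiff : ∀ x : ℝ, l < (x : EReal) → (x : EReal) < r → DifferentiableAt ℝ f x)
    (hfC : ContinuousOn (deriv f) {x : ℝ | l < (x : EReal) ∧ (x : EReal) < r})
    (x₀ : ℝ) (hx₀l : l < (x₀ : EReal)) (hx₀r : (x₀ : EReal) < r)
    (hgdiff : ∀ x : ℝ, x₀ < x → (x : EReal) < r → DifferentiableAt ℝ g x)
    (hgC : ContinuousOn (deriv g) {x : ℝ | x₀ < x ∧ (x : EReal) < r})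
    (hgpos : ∀ x : ℝ, x₀ < x → (x : EReal) < r → 0 < g x)
    (hg' : ∀ x : ℝ, x₀ < x → (x : EReal) < r → deriv g x < 0)
    (hP : ∀ x, P x = -f x * (g x / deriv g x))
    (hPlim : Tendsto P (comap (fun x : ℝ => (x : EReal)) (nhdsWithin r (Iio r)))
      (nhds 0))
    (hmono : MonotoneOn (fun x => f x / (-deriv g x))
      {x : ℝ | x₀ < x ∧ (x : EReal) < r}) :
    ∀ x : ℝ, x₀ < x → (x : EReal) < r → 1 - F x ≥ P x :=
  stmt_3_general μ l r F f g P hFdef hf x₀ hx₀l hgdiff hgpos hg' hP hPlim hmono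
end

section
/- Let X be a continuous random variable with PDF f and CDF F supported on (l, r), let x₀ ∈ (l, r), and let g be a continuously differentiable function with g(x) > 0 and g'(x) > 0 for all x ∈ (l, x₀). Define P(x) = f(x) · g(x)/g'(x) and suppose P(x) → 0 as x → l. If x ↦ f(x)/g'(x) is monotone increasing on (l, x₀), then F(x) ≤ P(x) for all x ∈ (l, x₀). -/
open MeasureTheory Set Filter ProbabilityTheory Topology

/-!
For `l < a < x < x₀`, monotonicity of `f / g'` gives `f ≤ c g'` on `[a, x]` with
`c = f(x) / g'(x) ≥ 0`, so `F(x) - F(a) ≤ c (g(x) - g(a)) ≤ c g(x) = P(x)`.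
Letting `a ↓ l`, `F(a) → μ(-∞, l] = 0`.
-/

theorem sub_le_mul_sub_of_hasDerivAt {F G f G' : ℝ → ℝ} {a b c : ℝ} (hab : a ≤ b)
    (hF : ∀ t ∈ Icc a b, HasDerivAt F (f t) t) (hG : ∀ t ∈ Icc a b, HasDerivAt G (G' t) t)
    (hle : ∀ t ∈ Ioo a b, f t ≤ c * G' t) :
    F b - F a ≤ c * (G b - G a) := by
  have hmono : MonotoneOn (fun t => c * G t - F t) (Icc a b) := by
    refine monotoneOn_of_hasDerivWithinAt_nonneg (f' := fun t => c * G' t - f t)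
      (convex_Icc a b) (fun t ht => ?_) (fun t ht => ?_) (fun t ht => ?_)
    · exact (((hG t ht).continuousAt.const_mul c).sub (hF t ht).continuousAt).continuousWithinAt
    · rw [interior_Icc] at *
      exact (((hG t (Ioo_subset_Icc_self ht)).const_mul c).sub
        (hF t (Ioo_subset_Icc_self ht))).hasDerivWithinAt
    · rw [interior_Icc] at ht
      exact sub_nonneg.2 (hle t ht)
  have := hmono (left_mem_Icc.2 hab) (right_mem_Icc.2 hab) hab
  simp only at this
  linarith

theorem tendsto_measure_setOf_coe_le_nhdsGT (μ : Measure ℝ) [IsFiniteMeasure μ] (l : EReal) :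
    Tendsto (fun e : EReal => μ {y : ℝ | (y : EReal) ≤ e}) (𝓝[>] l)
      (𝓝 (μ {y : ℝ | (y : EReal) ≤ l})) := by
  rcases eq_or_ne l ⊤ with rfl | hl
  · simp
  have hInter : (⋂ e > l, {y : ℝ | (y : EReal) ≤ e}) = {y : ℝ | (y : EReal) ≤ l} := by
    ext y
    simpa only [mem_iInter] using ⟨le_of_forall_gt_imp_ge_of_dense, fun h e he => h.trans he.le⟩
  rw [← hInter]
  refine tendsto_measure_biInter_gt (fun e _ => ?_) (fun i j _ hij y hy => le_trans hy hij)
    ⟨⊤, hl.lt_top, measure_ne_top μ _⟩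
  exact (measurableSet_le measurable_coe_real_ereal measurable_const).nullMeasurableSet

theorem le_measureReal_setOf_coe_le_of_forall (μ : Measure ℝ) [IsFiniteMeasure μ] {l : EReal}
    {x δ : ℝ} (hlx : l < x) (h : ∀ a : ℝ, l < a → a < x → δ ≤ μ.real (Iic a)) :
    δ ≤ μ.real {y : ℝ | (y : EReal) ≤ l} := by
  have hlim := (ENNReal.tendsto_toReal (measure_ne_top μ _)).comp
    (tendsto_measure_setOf_coe_le_nhdsGT μ l)
  have : (𝓝[>] l).NeBot := nhdsGT_neBot_of_exists_gt ⟨x, hlx⟩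
  refine ge_of_tendsto hlim ?_
  filter_upwards [Ioo_mem_nhdsGT hlx] with e ⟨hle, hex⟩
  lift e to ℝ using ⟨(hex.trans (EReal.coe_lt_top x)).ne, (bot_le.trans_lt hle).ne'⟩
  simpa [measureReal_def, Iic] using h e hle (EReal.coe_lt_coe_iff.1 hex)

theorem stmt_8_general (μ : Measure ℝ) [IsProbabilityMeasure μ]
    (l r : EReal)
    (F f g P : ℝ → ℝ)
    (hFdef : ∀ x, F x = (μ (Iic x)).toReal)
    (hsupp : μ {x : ℝ | ¬ (l < (x : EReal) ∧ (x : EReal) < r)} = 0)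
    (hf : ∀ x : ℝ, l < (x : EReal) → (x : EReal) < r → HasDerivAt F (f x) x)
    (x₀ : ℝ) (hx₀r : (x₀ : EReal) < r)
    (hgdiff : ∀ x : ℝ, l < (x : EReal) → x < x₀ → DifferentiableAt ℝ g x)
    (hgpos : ∀ x : ℝ, l < (x : EReal) → x < x₀ → 0 < g x)
    (hg' : ∀ x : ℝ, l < (x : EReal) → x < x₀ → 0 < deriv g x)
    (hP : ∀ x, P x = f x * (g x / deriv g x))
    (hmono : MonotoneOn (fun x => f x / deriv g x)
      {x : ℝ | l < (x : EReal) ∧ x < x₀}) :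
    ∀ x : ℝ, l < (x : EReal) → x < x₀ → F x ≤ P x := by
  intro x hxl hxx₀
  have hlt_r : ∀ t : ℝ, t < x₀ → (t : EReal) < r := fun t ht => (EReal.coe_lt_coe ht).trans hx₀r
  have hF : F = cdf μ := funext fun y => by rw [hFdef, cdf_eq_real, measureReal_def]
  set c := f x / deriv g x
  have hc : 0 ≤ c := div_nonneg ((hf x hxl (hlt_r x hxx₀)).nonneg_of_monotone (hF ▸ (cdf μ).mono))
    (hg' x hxl hxx₀).le
  have hkey : ∀ a : ℝ, l < a → a < x → F x - P x ≤ μ.real (Iic a) := by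
    intro a hal hax
    have hS : ∀ t ∈ Icc a x, l < (t : EReal) ∧ t < x₀ := fun t ht =>
      ⟨hal.trans_le (EReal.coe_le_coe ht.1), ht.2.trans_lt hxx₀⟩
    have hratio : ∀ t ∈ Ioo a x, f t ≤ c * deriv g t := fun t ht => by
      obtain ⟨htl, htx₀⟩ := hS t (Ioo_subset_Icc_self ht)
      exact (div_le_iff₀ (hg' t htl htx₀)).1 (hmono ⟨htl, htx₀⟩ ⟨hxl, hxx₀⟩ ht.2.le)
    have hFG := sub_le_mul_sub_of_hasDerivAt hax.le
      (fun t ht => hf t (hS t ht).1 (hlt_r t (hS t ht).2))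
      (fun t ht => (hgdiff t (hS t ht).1 (hS t ht).2).hasDerivAt) hratio
    have hPx : P x = c * g x := by rw [hP]; ring
    rw [measureReal_def, ← hFdef]
    linarith [mul_nonneg hc (hgpos a hal (hax.trans hxx₀)).le]
  have hnull : μ.real {y : ℝ | (y : EReal) ≤ l} = 0 := by
    refine (measureReal_eq_zero_iff).2 (measure_mono_null ?_ hsupp)
    exact fun y hy hy' => not_lt.2 hy hy'.1
  linarith [le_measureReal_setOf_coe_le_of_forall μ hxl hkey]

/-- Theorem 2 (left-tail upper bound): for a RV supported on `(l, r)` with CDF `F`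
and continuously differentiable PDF `f`, if `g > 0`, `g' > 0` on `(l, x₀)`,
`P x = f x * g x / g' x` tends to `0` as `x → l⁺`, and `f / g'` is increasing
on `(l, x₀)`, then `F x ≤ P x` on `(l, x₀)`. -/
theorem stmt_8 (μ : Measure ℝ) [IsProbabilityMeasure μ]
    (l r : EReal) (hlr : l < r)
    (F f g P : ℝ → ℝ)
    (hFdef : ∀ x, F x = (μ (Iic x)).toReal)
    (hsupp : μ {x : ℝ | ¬ (l < (x : EReal) ∧ (x : EReal) < r)} = 0)
    (hf : ∀ x : ℝ, l < (x : EReal) → (x : EReal) < r → HasDerivAt F (f x) x)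
    (hfdiff : ∀ x : ℝ, l < (x : EReal) → (x : EReal) < r → DifferentiableAt ℝ f x)
    (hfC : ContinuousOn (deriv f) {x : ℝ | l < (x : EReal) ∧ (x : EReal) < r})
    (x₀ : ℝ) (hx₀l : l < (x₀ : EReal)) (hx₀r : (x₀ : EReal) < r)
    (hgdiff : ∀ x : ℝ, l < (x : EReal) → x < x₀ → DifferentiableAt ℝ g x)
    (hgC : ContinuousOn (deriv g) {x : ℝ | l < (x : EReal) ∧ x < x₀})
    (hgpos : ∀ x : ℝ, l < (x : EReal) → x < x₀ → 0 < g x)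
    (hg' : ∀ x : ℝ, l < (x : EReal) → x < x₀ → 0 < deriv g x)
    (hP : ∀ x, P x = f x * (g x / deriv g x))
    (hPlim : Tendsto P (comap (fun x : ℝ => (x : EReal)) (nhdsWithin l (Ioi l)))
      (nhds 0))
    (hmono : MonotoneOn (fun x => f x / deriv g x)
      {x : ℝ | l < (x : EReal) ∧ x < x₀}) :
    ∀ x : ℝ, l < (x : EReal) → x < x₀ → F x ≤ P x :=
  stmt_8_general μ l r F f g P hFdef hsupp hf x₀ hx₀r hgdiff hgpos hg' hP hmono
end

section
/- Let X be a continuous random variable with PDF f and CDF F supported on (l, r), let x₀ ∈ (l, r), and let g be a continuously differentiable function with g(x) > 0 and g'(x) > 0 for all x ∈ (l, x₀). Define P(x) = f(x) · g(x)/g'(x) and suppose P(x) → 0 as x → l. If x ↦ f(x)/g'(x) is monotone decreasing on (l, x₀), then F(x) ≥ P(x) for all x ∈ (l, x₀). -/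
open MeasureTheory Set Filter Topology

/-! Fix `x` and `l < a < x`. Since `f / g'` decreases, `f t ≥ (f x / g' x) g' t` on `[a, x]`, so
`F - (f x / g' x) g` is monotone there (mean value theorem). Hence
`F x ≥ P x - (f x / g' x) g a + F a ≥ P x - P a`, and letting `a → l` kills `P a`. -/

lemma monotoneOn_sub_const_mul_of_le_hasDerivAt {F f g g' : ℝ → ℝ} {a b c : ℝ}
    (hF : ∀ t ∈ Icc a b, HasDerivAt F (f t) t) (hg : ∀ t ∈ Icc a b, HasDerivAt g (g' t) t)
    (hle : ∀ t ∈ Icc a b, c * g' t ≤ f t) :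
    MonotoneOn (fun t => F t - c * g t) (Icc a b) := by
  have hderiv : ∀ t ∈ Icc a b, HasDerivAt (fun t => F t - c * g t) (f t - c * g' t) t :=
    fun t ht => (hF t ht).sub ((hg t ht).const_mul c)
  refine monotoneOn_of_hasDerivWithinAt_nonneg (convex_Icc a b)
    (fun t ht => (hderiv t ht).continuousAt.continuousWithinAt)
    (fun t ht => (hderiv t (interior_subset ht)).hasDerivWithinAt)
    (fun t ht => sub_nonneg.2 (hle t (interior_subset ht)))

lemma sub_le_sub_of_antitoneOn_div {F f g g' : ℝ → ℝ} {a b : ℝ} (hab : a ≤ b)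
    (hF : ∀ t ∈ Icc a b, HasDerivAt F (f t) t) (hg : ∀ t ∈ Icc a b, HasDerivAt g (g' t) t)
    (hg' : ∀ t ∈ Icc a b, 0 < g' t) (hga : 0 ≤ g a)
    (hmono : AntitoneOn (fun t => f t / g' t) (Icc a b)) :
    f b * (g b / g' b) - f a * (g a / g' a) ≤ F b - F a := by
  have ha : a ∈ Icc a b := left_mem_Icc.2 hab
  have hb : b ∈ Icc a b := right_mem_Icc.2 hab
  set c := f b / g' b
  have hle : ∀ t ∈ Icc a b, c * g' t ≤ f t := fun t ht =>
    (le_div_iff₀ (hg' t ht)).1 (hmono ht hb ht.2)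
  have hFg := monotoneOn_sub_const_mul_of_le_hasDerivAt hF hg hle ha hb hab
  have hca : c * g a ≤ f a * (g a / g' a) :=
    calc c * g a ≤ f a / g' a * g a := mul_le_mul_of_nonneg_right (hmono ha hb hab) hga
      _ = f a * (g a / g' a) := by ring
  have hcb : c * g b = f b * (g b / g' b) := by ring
  simp only at hFg
  linarith

lemma EReal.eventually_comap_coe_nhdsGT_lt {l : EReal} {x : ℝ} (hlx : l < x) :
    ∀ᶠ a : ℝ in comap (fun a : ℝ => (a : EReal)) (𝓝[>] l), l < a ∧ a < x := by
  have hx : Iio (x : EReal) ∈ 𝓝[>] l := mem_nhdsWithin_of_mem_nhds (isOpen_Iio.mem_nhds hlx)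
  filter_upwards [preimage_mem_comap (inter_mem self_mem_nhdsWithin hx)] with a ha
  exact ⟨ha.1, EReal.coe_lt_coe_iff.1 ha.2⟩

lemma EReal.comap_coe_nhdsGT_neBot {l : EReal} (hl : l ≠ ⊤) :
    (comap (fun a : ℝ => (a : EReal)) (𝓝[>] l)).NeBot := by
  rw [((nhdsGT_basis_of_exists_gt ⟨⊤, hl.lt_top⟩).comap _).neBot_iff]
  intro u hu
  obtain ⟨a, hla, hau⟩ := EReal.lt_iff_exists_real_btwn.1 hu
  exact ⟨a, hla, hau⟩

theorem stmt_9_general (μ : Measure ℝ)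
    (l r : EReal)
    (F f g P : ℝ → ℝ)
    (hFdef : ∀ x, F x = (μ (Iic x)).toReal)
    (hf : ∀ x : ℝ, l < (x : EReal) → (x : EReal) < r → HasDerivAt F (f x) x)
    (x₀ : ℝ) (hx₀r : (x₀ : EReal) < r)
    (hgdiff : ∀ x : ℝ, l < (x : EReal) → x < x₀ → DifferentiableAt ℝ g x)
    (hgpos : ∀ x : ℝ, l < (x : EReal) → x < x₀ → 0 < g x)
    (hg' : ∀ x : ℝ, l < (x : EReal) → x < x₀ → 0 < deriv g x)
    (hP : ∀ x, P x = f x * (g x / deriv g x))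
    (hPlim : Tendsto P (comap (fun x : ℝ => (x : EReal)) (nhdsWithin l (Ioi l)))
      (nhds 0))
    (hmono : AntitoneOn (fun x => f x / deriv g x)
      {x : ℝ | l < (x : EReal) ∧ x < x₀}) :
    ∀ x : ℝ, l < (x : EReal) → x < x₀ → F x ≥ P x := by
  intro x hlx hxx₀
  have := EReal.comap_coe_nhdsGT_neBot (hlx.trans (EReal.coe_lt_top x)).ne
  have tail : ∀ᶠ a in comap (fun a : ℝ => (a : EReal)) (𝓝[>] l), P x - P a ≤ F x := by
    filter_upwards [EReal.eventually_comap_coe_nhdsGT_lt hlx] with a ⟨hla, hax⟩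
    have hsub : Icc a x ⊆ {t : ℝ | l < (t : EReal) ∧ t < x₀} := fun t ht =>
      ⟨hla.trans_le (EReal.coe_le_coe_iff.2 ht.1), ht.2.trans_lt hxx₀⟩
    have hFa : 0 ≤ F a := hFdef a ▸ ENNReal.toReal_nonneg
    have key := sub_le_sub_of_antitoneOn_div hax.le
      (fun t ht => hf t (hsub ht).1 ((EReal.coe_lt_coe_iff.2 (hsub ht).2).trans hx₀r))
      (fun t ht => (hgdiff t (hsub ht).1 (hsub ht).2).hasDerivAt)
      (fun t ht => hg' t (hsub ht).1 (hsub ht).2) (hgpos a hla (hax.trans hxx₀)).le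
      (hmono.mono hsub)
    rw [hP x, hP a]
    linarith
  simpa using le_of_tendsto (tendsto_const_nhds.sub hPlim) tail

/-- Theorem 2 (left-tail upper bound): for a RV supported on `(l, r)` with CDF `F`
and continuously differentiable PDF `f`, if `g > 0`, `g' > 0` on `(l, x₀)`,
`P x = f x * g x / g' x` tends to `0` as `x → l⁺`, and `f / g'` is decreasing
on `(l, x₀)`, then `F x ≥ P x` on `(l, x₀)`. -/
theorem stmt_9 (μ : Measure ℝ) [IsProbabilityMeasure μ]
    (l r : EReal) (hlr : l < r)
    (F f g P : ℝ → ℝ)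
    (hFdef : ∀ x, F x = (μ (Iic x)).toReal)
    (hsupp : μ {x : ℝ | ¬ (l < (x : EReal) ∧ (x : EReal) < r)} = 0)
    (hf : ∀ x : ℝ, l < (x : EReal) → (x : EReal) < r → HasDerivAt F (f x) x)
    (hfdiff : ∀ x : ℝ, l < (x : EReal) → (x : EReal) < r → DifferentiableAt ℝ f x)
    (hfC : ContinuousOn (deriv f) {x : ℝ | l < (x : EReal) ∧ (x : EReal) < r})
    (x₀ : ℝ) (hx₀l : l < (x₀ : EReal)) (hx₀r : (x₀ : EReal) < r)
    (hgdiff : ∀ x : ℝ, l < (x : EReal) → x < x₀ → DifferentiableAt ℝ g x)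
    (hgC : ContinuousOn (deriv g) {x : ℝ | l < (x : EReal) ∧ x < x₀})
    (hgpos : ∀ x : ℝ, l < (x : EReal) → x < x₀ → 0 < g x)
    (hg' : ∀ x : ℝ, l < (x : EReal) → x < x₀ → 0 < deriv g x)
    (hP : ∀ x, P x = f x * (g x / deriv g x))
    (hPlim : Tendsto P (comap (fun x : ℝ => (x : EReal)) (nhdsWithin l (Ioi l)))
      (nhds 0))
    (hmono : AntitoneOn (fun x => f x / deriv g x)
      {x : ℝ | l < (x : EReal) ∧ x < x₀}) :
    ∀ x : ℝ, l < (x : EReal) → x < x₀ → F x ≥ P x :=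
  stmt_9_general μ l r F f g P hFdef hf x₀ hx₀r hgdiff hgpos hg' hP hPlim hmono
end

section
/- Let f be the PDF of a continuous random variable with CDF F supported on (l, r), and let P_i be a differentiable upper bound on the right tail with P_i'(x) ≤ -f(x) for all x > x₀ (i.e., P_i satisfies the upper-bound condition of the tail-bounding theorem) and P_i'(x) < 0, P_i(x) > 0 for all x > x̂₀. Define P_{i+1}(x) = -f(x) · P_i(x)/P_i'(x). Then P_{i+1}(x) ≤ P_i(x) for all x > max(x₀, x̂₀). -/
open MeasureTheory Set Filter

/-- Lemma 3 (first part): if `Pᵢ' x ≤ -f x` for `x > x₀` and `Pᵢ' x < 0`,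
`Pᵢ x > 0` for `x > xh₀`, then `Pᵢ₊₁ x = -f x * Pᵢ x / Pᵢ' x ≤ Pᵢ x` for
`x > max x₀ xh₀`. -/
theorem stmt_11 (μ : Measure ℝ) [IsProbabilityMeasure μ]
    (l r : EReal) (hlr : l < r)
    (F f Pi Pnext : ℝ → ℝ)
    (hFdef : ∀ x, F x = (μ (Iic x)).toReal)
    (hsupp : μ {x : ℝ | ¬ (l < (x : EReal) ∧ (x : EReal) < r)} = 0)
    (hf : ∀ x : ℝ, l < (x : EReal) → (x : EReal) < r → HasDerivAt F (f x) x)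
    (x₀ xh₀ : ℝ)
    (hPdiff : ∀ x : ℝ, l < (x : EReal) → (x : EReal) < r → DifferentiableAt ℝ Pi x)
    (hub : ∀ x : ℝ, x₀ < x → (x : EReal) < r → deriv Pi x ≤ -f x)
    (hP' : ∀ x : ℝ, xh₀ < x → (x : EReal) < r → deriv Pi x < 0)
    (hPpos : ∀ x : ℝ, xh₀ < x → (x : EReal) < r → 0 < Pi x)
    (hPnext : ∀ x, Pnext x = -f x * (Pi x / deriv Pi x)) :
    ∀ x : ℝ, max x₀ xh₀ < x → (x : EReal) < r → Pnext x ≤ Pi x := by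
  intro x hx hxr
  have hx0 : x₀ < x := lt_of_le_of_lt (le_max_left _ _) hx
  have hxh : xh₀ < x := lt_of_le_of_lt (le_max_right _ _) hx
  have hd : deriv Pi x < 0 := hP' x hxh hxr
  have hp : 0 < Pi x := hPpos x hxh hxr
  have hub' : deriv Pi x ≤ -f x := hub x hx0 hxr
  rw [hPnext, mul_div_assoc', div_le_iff_of_neg hd]
  calc Pi x * deriv Pi x ≤ Pi x * (-f x) := by
        exact mul_le_mul_of_nonneg_left hub' hp.le
    _ = -f x * Pi x := mul_comm _ _
end

section
/- Let Φ be the CDF of the normal distribution with mean μ and standard deviation σ > 0, and let f be its density. For all x > x₂, where x₂ is the largest real root of (x-μ)⁴ + 2σ²(x-μ)² - σ⁴ = 0 (namely x₂ = μ + σ√(√2 - 1)), the following upper bound holds: 1 - Φ(x) ≤ f(x) · σ² (x-μ)(σ² + (x-μ)²) / (-σ⁴ + 2σ²(x-μ)² + (x-μ)⁴) · (1/σ), i.e., 1 - Φ(x) ≤ (σ (x-μ)(σ² + (x-μ)²) / (√(2π)(-σ⁴ + 2σ²(x-μ)² + (x-μ)⁴))) · e^{-(x-μ)²/(2σ²)}.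 -/
/-!
Write `t = x - μ` and `D = -σ⁴ + 2σ²t² + t⁴`. The bound `B(x)` on the right satisfies
`B' = -f - 8σ⁵t² e^{-t²/(2σ²)} / (√(2π) D²) ≤ -f` wherever `D ≠ 0`, and `B ≥ 0` where `D > 0`,
i.e. beyond the largest root `x₂`. Hence `y ↦ B y + ∫_x^y f` is nonincreasing on `[x, ∞)`,
and letting `y → ∞` gives `∫_x^∞ f ≤ B x`.
-/

open MeasureTheory Set Filter Real ProbabilityTheory

theorem setIntegral_Ioi_le_of_hasDerivAt {f B b : ℝ → ℝ} {x : ℝ} (hf : Continuous f)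
    (hfi : IntegrableOn f (Ioi x)) (hB : ∀ y ∈ Ici x, HasDerivAt B (b y) y)
    (hbf : ∀ y ∈ Ioi x, b y + f y ≤ 0) (hB0 : ∀ y ∈ Ioi x, 0 ≤ B y) :
    ∫ t in Ioi x, f t ≤ B x := by
  set G : ℝ → ℝ := fun y => B y + ∫ t in x..y, f t
  have hG : ∀ y, HasDerivAt (fun y => ∫ t in x..y, f t) (f y) y := fun y =>
    intervalIntegral.integral_hasDerivAt_right (hf.intervalIntegrable _ _)
      (hf.stronglyMeasurableAtFilter _ _) hf.continuousAt
  have hGanti : AntitoneOn G (Ici x) := by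
    refine antitoneOn_of_hasDerivWithinAt_nonpos (f' := fun y => b y + f y) (convex_Ici x)
      (fun y hy => ((hB y hy).add (hG y)).continuousAt.continuousWithinAt) (fun y hy => ?_)
      (fun y hy => ?_)
    · rw [interior_Ici] at hy ⊢
      exact ((hB y (mem_Ici_of_Ioi hy)).add (hG y)).hasDerivWithinAt
    · rw [interior_Ici] at hy
      exact hbf y hy
  have hbound : ∀ y ∈ Ioi x, ∫ t in x..y, f t ≤ B x := fun y hy => by
    have hGy : G y ≤ G x := hGanti self_mem_Ici (mem_Ici_of_Ioi hy) hy.le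
    simp only [G, intervalIntegral.integral_same, add_zero] at hGy
    linarith [hB0 y hy]
  exact le_of_tendsto (intervalIntegral_tendsto_integral_Ioi x hfi tendsto_id)
    (eventually_gt_atTop x |>.mono hbound)

theorem gaussianPDFReal_sq_toNNReal {σ : ℝ} (hσ : 0 ≤ σ) (μ t : ℝ) :
    gaussianPDFReal μ (σ ^ 2).toNNReal t =
      1 / (σ * √(2 * π)) * exp (-(t - μ) ^ 2 / (2 * σ ^ 2)) := by
  rw [gaussianPDFReal, Real.coe_toNNReal _ (sq_nonneg σ), mul_comm (2 * π),
    Real.sqrt_mul (sq_nonneg σ), Real.sqrt_sq hσ, one_div]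

theorem continuous_gaussianPDFReal (μ : ℝ) (v : NNReal) : Continuous (gaussianPDFReal μ v) := by
  unfold gaussianPDFReal
  fun_prop

theorem neg_pow_four_add_two_mul_sq_mul_sq_add_pow_four_pos {σ t : ℝ} (hσ : 0 ≤ σ)
    (ht : σ * √(√2 - 1) < t) : 0 < -σ ^ 4 + 2 * σ ^ 2 * t ^ 2 + t ^ 4 := by
  have hsqrt2 : √2 ^ 2 = 2 := sq_sqrt zero_le_two
  have hone : 1 ≤ √2 := one_le_sqrt.mpr one_le_two
  have hroot : √(√2 - 1) ^ 2 = √2 - 1 := sq_sqrt (by linarith)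
  have hσr : 0 ≤ σ * √(√2 - 1) := mul_nonneg hσ (sqrt_nonneg _)
  have ht2 : σ ^ 2 * (√2 - 1) < t ^ 2 := by
    rw [← hroot, ← mul_pow]
    exact pow_lt_pow_left₀ ht hσr two_ne_zero
  -- `-σ⁴ + 2σ²t² + t⁴ = (t² + σ²)² - (√2 σ²)²`
  have hsum : √2 * σ ^ 2 < t ^ 2 + σ ^ 2 := by linarith
  have hsq := pow_lt_pow_left₀ hsum (by positivity) two_ne_zero
  nlinarith

/-- The second iterate `P₂` of the tail bound for `N(μ, σ²)`. -/
noncomputable def normalTailBound (μ σ x : ℝ) : ℝ :=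
  σ * (x - μ) * (σ ^ 2 + (x - μ) ^ 2) /
      (√(2 * π) * (-σ ^ 4 + 2 * σ ^ 2 * (x - μ) ^ 2 + (x - μ) ^ 4)) *
    exp (-(x - μ) ^ 2 / (2 * σ ^ 2))

theorem normalTailBound_nonneg {μ σ x : ℝ} (hσ : 0 ≤ σ) (hx : μ ≤ x)
    (hD : 0 < -σ ^ 4 + 2 * σ ^ 2 * (x - μ) ^ 2 + (x - μ) ^ 4) : 0 ≤ normalTailBound μ σ x := by
  have : 0 ≤ x - μ := sub_nonneg.mpr hx
  unfold normalTailBound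
  positivity

theorem hasDerivAt_normalTailBound {μ σ y : ℝ} (hσ : σ ≠ 0)
    (hD : -σ ^ 4 + 2 * σ ^ 2 * (y - μ) ^ 2 + (y - μ) ^ 4 ≠ 0) :
    HasDerivAt (normalTailBound μ σ)
      (-8 * σ ^ 5 * (y - μ) ^ 2 * exp (-(y - μ) ^ 2 / (2 * σ ^ 2)) /
          (√(2 * π) * (-σ ^ 4 + 2 * σ ^ 2 * (y - μ) ^ 2 + (y - μ) ^ 4) ^ 2)
        - 1 / (σ * √(2 * π)) * exp (-(y - μ) ^ 2 / (2 * σ ^ 2))) y := by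
  have hc : √(2 * π) ≠ 0 := (sqrt_pos.mpr (by positivity)).ne'
  have ht : HasDerivAt (fun z : ℝ => z - μ) 1 y := (hasDerivAt_id y).sub_const μ
  have hN := (ht.const_mul σ).mul ((ht.pow 2).const_add (σ ^ 2))
  have hDD := ((((ht.pow 2).const_mul (2 * σ ^ 2)).const_add (-σ ^ 4)).add
    (ht.pow 4)).const_mul √(2 * π)
  have hE := ((ht.pow 2).neg.div_const (2 * σ ^ 2)).exp
  refine ((hN.div hDD (mul_ne_zero hc hD)).mul hE).congr_deriv ?_
  have hD' : σ ^ 2 * (-σ ^ 2 + (y - μ) ^ 2 * 2) + (y - μ) ^ 4 ≠ 0 := by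
    convert hD using 1; ring
  simp only [Pi.div_apply, Pi.mul_apply, Pi.pow_apply, Pi.neg_apply, Pi.add_apply]
  field_simp
  ring

theorem integral_Ioi_gaussianPDFReal_le_normalTailBound {μ σ x : ℝ} (hσ : 0 < σ)
    (hx : μ + σ * √(√2 - 1) < x) :
    ∫ t in Ioi x, gaussianPDFReal μ (σ ^ 2).toNNReal t ≤ normalTailBound μ σ x := by
  have hD : ∀ y ∈ Ici x, 0 < -σ ^ 4 + 2 * σ ^ 2 * (y - μ) ^ 2 + (y - μ) ^ 4 := fun y hy =>
    neg_pow_four_add_two_mul_sq_mul_sq_add_pow_four_pos hσ.le (by linarith [mem_Ici.mp hy])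
  have hμx : μ ≤ x := by nlinarith [mul_nonneg hσ.le (sqrt_nonneg (√2 - 1))]
  refine setIntegral_Ioi_le_of_hasDerivAt (continuous_gaussianPDFReal _ _)
    (integrable_gaussianPDFReal _ _).integrableOn
    (fun y hy => hasDerivAt_normalTailBound hσ.ne' (hD y hy).ne') (fun y _ => ?_)
    (fun y hy => normalTailBound_nonneg hσ.le (hμx.trans hy.le) (hD y (mem_Ici_of_Ioi hy)))
  rw [gaussianPDFReal_sq_toNNReal hσ.le, sub_add_cancel]
  have : 0 ≤ 8 * σ ^ 5 * (y - μ) ^ 2 * exp (-(y - μ) ^ 2 / (2 * σ ^ 2)) := by positivity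
  exact div_nonpos_of_nonpos_of_nonneg (by linarith) (by positivity)

/-- Second iterate `P₂` upper bound for the normal `N(μ, σ²)` tail: for all
`x > μ + σ√(√2 - 1)`,
`1 - Φ(x) ≤ σ(x-μ)(σ² + (x-μ)²) e^{-(x-μ)²/(2σ²)} / (√(2π)(-σ⁴ + 2σ²(x-μ)² + (x-μ)⁴))`. -/
theorem stmt_17 (μ σ : ℝ) (hσ : 0 < σ) :
    ∀ x : ℝ, μ + σ * Real.sqrt (Real.sqrt 2 - 1) < x →
      1 - (∫ t in Iic x,
            (1 / (σ * Real.sqrt (2 * Real.pi))) * Real.exp (-(t - μ) ^ 2 / (2 * σ ^ 2)))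
        ≤ (σ * (x - μ) * (σ ^ 2 + (x - μ) ^ 2) /
            (Real.sqrt (2 * Real.pi) *
              (-σ ^ 4 + 2 * σ ^ 2 * (x - μ) ^ 2 + (x - μ) ^ 4))) *
          Real.exp (-(x - μ) ^ 2 / (2 * σ ^ 2)) := by
  intro x hx
  have hv : (σ ^ 2).toNNReal ≠ 0 := by simpa using hσ.ne'
  have hsplit : (∫ t in Iic x, gaussianPDFReal μ (σ ^ 2).toNNReal t) +
      ∫ t in Ioi x, gaussianPDFReal μ (σ ^ 2).toNNReal t = 1 :=
    (intervalIntegral.integral_Iic_add_Ioi (integrable_gaussianPDFReal _ _).integrableOn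
      (integrable_gaussianPDFReal _ _).integrableOn).trans (integral_gaussianPDFReal_eq_one μ hv)
  have htail := integral_Ioi_gaussianPDFReal_le_normalTailBound hσ hx
  unfold normalTailBound at htail
  simp_rw [← gaussianPDFReal_sq_toNNReal hσ.le]
  linarith
end

section
/- Let X be a beta prime random variable with parameters α, β > 0, having PDF f(x) = x^{α-1}(1+x)^{-α-β}/B(α,β) and CDF F on (0, ∞). For all x > α/β, 1 - F(x) ≤ x^α (1+x)^{1-α-β} / (B(α,β)(βx - α)). -/
/-!
Substituting `t = u / (1 - u)` turns `∫₀^∞ t^(α-1) (1+t)^(-α-β) dt` into Euler's Beta integral,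
so `B(α, β)` is the total mass and `1 - F(x) = (∫ₓ^∞ f) / B(α, β)`. For `t > α/β` the majorant
`G(t) = t^α (1+t)^(1-α-β) / (βt - α)` is nonnegative and satisfies
`-G'(t) = f(t) (1 + (α+β) t / (βt - α)²) ≥ f(t)`,
hence `∫ₓ^R f ≤ G(x) - G(R) ≤ G(x)` for all `R ≥ x`.
-/

open MeasureTheory Set Filter ProbabilityTheory

section BetaPrimeIntegral

variable {α β : ℝ}

lemma ofReal_cpow_mul_one_sub_cpow {u : ℝ} (hu : u ∈ Icc (0 : ℝ) 1) :
    (u : ℂ) ^ ((α : ℂ) - 1) * (1 - (u : ℂ)) ^ ((β : ℂ) - 1)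
      = ((u ^ (α - 1) * (1 - u) ^ (β - 1) : ℝ) : ℂ) := by
  have h1u : 0 ≤ 1 - u := sub_nonneg.2 hu.2
  push_cast
  rw [Complex.ofReal_cpow hu.1, Complex.ofReal_cpow h1u]
  push_cast
  rfl

lemma integrableOn_Ioo_rpow_mul_one_sub_rpow (hα : 0 < α) (hβ : 0 < β) :
    IntegrableOn (fun u : ℝ => u ^ (α - 1) * (1 - u) ^ (β - 1)) (Ioo 0 1) := by
  have hc := (Complex.betaIntegral_convergent (u := α) (v := β) (by simpa) (by simpa)).1.mono_set
    Ioo_subset_Ioc_self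
  have := (hc.congr_fun (fun u hu => ofReal_cpow_mul_one_sub_cpow (Ioo_subset_Icc_self hu))
    measurableSet_Ioo).re
  simpa [IntegrableOn] using this

lemma integral_Ioo_rpow_mul_one_sub_rpow (hα : 0 < α) (hβ : 0 < β) :
    ∫ u in Ioo (0 : ℝ) 1, u ^ (α - 1) * (1 - u) ^ (β - 1) = beta α β := by
  rw [beta_eq_betaIntegralReal α β hα hβ, Complex.betaIntegral,
    intervalIntegral.integral_congr
      (g := fun u : ℝ => ((u ^ (α - 1) * (1 - u) ^ (β - 1) : ℝ) : ℂ))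
      (fun u hu => ofReal_cpow_mul_one_sub_cpow (by rwa [uIcc_of_le zero_le_one] at hu)),
    intervalIntegral.integral_ofReal, Complex.ofReal_re,
    intervalIntegral.integral_of_le zero_le_one, integral_Ioc_eq_integral_Ioo]

lemma hasDerivAt_div_one_sub {u : ℝ} (hu : u ≠ 1) :
    HasDerivAt (fun u : ℝ => u / (1 - u)) ((1 - u) ^ 2)⁻¹ u := by
  have h1u : 1 - u ≠ 0 := sub_ne_zero.2 hu.symm
  refine ((hasDerivAt_id' u).div ((hasDerivAt_id' u).const_sub 1) h1u).congr_deriv ?_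
  field_simp
  ring

lemma injOn_div_one_sub : InjOn (fun u : ℝ => u / (1 - u)) {1}ᶜ := by
  intro u hu v hv huv
  have h1u : 1 - u ≠ 0 := sub_ne_zero.2 (Ne.symm hu)
  have h1v : 1 - v ≠ 0 := sub_ne_zero.2 (Ne.symm hv)
  field_simp at huv
  linarith

lemma image_div_one_sub_Ioo : (fun u : ℝ => u / (1 - u)) '' Ioo 0 1 = Ioi 0 := by
  ext t
  constructor
  · rintro ⟨u, ⟨hu0, hu1⟩, rfl⟩
    exact div_pos hu0 (sub_pos.2 hu1)
  · intro (ht : 0 < t)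
    refine ⟨t / (1 + t), ⟨by positivity, (div_lt_one (by positivity)).2 (by linarith)⟩, ?_⟩
    field_simp
    ring

lemma inv_one_sub_sq_mul_rpow_div_one_sub {u : ℝ} (hu : u ∈ Ioo (0 : ℝ) 1) :
    ((1 - u) ^ 2)⁻¹ * ((u / (1 - u)) ^ (α - 1) * (1 + u / (1 - u)) ^ (-α - β))
      = u ^ (α - 1) * (1 - u) ^ (β - 1) := by
  have h1u : 0 < 1 - u := sub_pos.2 hu.2
  have hsum : 1 + u / (1 - u) = (1 - u)⁻¹ := by field_simp; ring
  rw [hsum, Real.div_rpow hu.1.le h1u.le, Real.inv_rpow h1u.le, ← Real.rpow_neg h1u.le,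
    ← Real.rpow_natCast, ← Real.rpow_neg h1u.le, div_eq_mul_inv, ← Real.rpow_neg h1u.le]
  rw [mul_left_comm, ← mul_assoc, mul_assoc, ← Real.rpow_add h1u, mul_assoc,
    ← Real.rpow_add h1u]
  ring_nf

lemma integrableOn_Ioi_rpow_mul_one_add_rpow (hα : 0 < α) (hβ : 0 < β) :
    IntegrableOn (fun t : ℝ => t ^ (α - 1) * (1 + t) ^ (-α - β)) (Ioi 0) := by
  rw [← image_div_one_sub_Ioo,
    integrableOn_image_iff_integrableOn_abs_deriv_smul measurableSet_Ioo
    (fun u hu => (hasDerivAt_div_one_sub hu.2.ne).hasDerivWithinAt)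
    (injOn_div_one_sub.mono fun u hu => hu.2.ne)]
  refine (integrableOn_Ioo_rpow_mul_one_sub_rpow hα hβ).congr_fun (fun u hu => ?_)
    measurableSet_Ioo
  rw [smul_eq_mul, abs_of_nonneg (by positivity), inv_one_sub_sq_mul_rpow_div_one_sub hu]

lemma integral_Ioi_rpow_mul_one_add_rpow (hα : 0 < α) (hβ : 0 < β) :
    ∫ t in Ioi (0 : ℝ), t ^ (α - 1) * (1 + t) ^ (-α - β) = beta α β := by
  rw [← image_div_one_sub_Ioo, integral_image_eq_integral_abs_deriv_smul measurableSet_Ioo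
    (fun u hu => (hasDerivAt_div_one_sub hu.2.ne).hasDerivWithinAt)
    (injOn_div_one_sub.mono fun u hu => hu.2.ne), ← integral_Ioo_rpow_mul_one_sub_rpow hα hβ]
  refine setIntegral_congr_fun measurableSet_Ioo fun u hu => ?_
  rw [smul_eq_mul, abs_of_nonneg (by positivity), inv_one_sub_sq_mul_rpow_div_one_sub hu]

end BetaPrimeIntegral

section BetaPrimeTail

variable {α β : ℝ}

noncomputable def betaPrimeTailMajorant (α β t : ℝ) : ℝ :=
  t ^ α * (1 + t) ^ (1 - α - β) / (β * t - α)

lemma hasDerivAt_betaPrimeTailMajorant {t : ℝ} (ht : 0 < t) (hd : β * t - α ≠ 0) :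
    HasDerivAt (betaPrimeTailMajorant α β)
      (-(t ^ (α - 1) * (1 + t) ^ (-α - β) * (1 + (α + β) * t / (β * t - α) ^ 2))) t := by
  have h1t : 0 < 1 + t := by linarith
  have hnum := (Real.hasDerivAt_rpow_const (p := α) (Or.inl ht.ne')).mul
    (((hasDerivAt_id' t).const_add 1).rpow_const (p := 1 - α - β) (Or.inl h1t.ne'))
  have hden : HasDerivAt (fun s => β * s - α) β t := by
    simpa using ((hasDerivAt_id' t).const_mul β).sub_const α
  refine (hnum.div hden hd).congr_deriv ?_
  have hA : t ^ α = t ^ (α - 1) * t := by rw [← Real.rpow_add_one ht.ne', sub_add_cancel]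
  have hB : (1 + t) ^ (1 - α - β) = (1 + t) ^ (-α - β) * (1 + t) := by
    rw [← Real.rpow_add_one h1t.ne']; ring_nf
  simp only [Pi.mul_apply]
  rw [hA, hB, show 1 - α - β - 1 = -α - β by ring]
  generalize t ^ (α - 1) = a
  generalize (1 + t) ^ (-α - β) = b
  have hD : (α + β) * t / (β * t - α) ^ 2 * (β * t - α) ^ 2 = (α + β) * t :=
    div_mul_cancel₀ _ (pow_ne_zero 2 hd)
  rw [div_eq_iff (pow_ne_zero 2 hd)]
  linear_combination a * b * hD

lemma integral_le_betaPrimeTailMajorant_sub (hβ : 0 ≤ β) (hαβ : 0 ≤ α + β) {x R : ℝ}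
    (hx : 0 < x) (hαx : α < β * x) (hxR : x ≤ R) :
    ∫ t in x..R, t ^ (α - 1) * (1 + t) ^ (-α - β)
      ≤ betaPrimeTailMajorant α β x - betaPrimeTailMajorant α β R := by
  have hmem : ∀ t ∈ Icc x R, 0 < t ∧ 0 < β * t - α := fun t ht =>
    ⟨hx.trans_le ht.1, by nlinarith [ht.1]⟩
  have hderiv : ∀ t ∈ Icc x R, HasDerivAt (-betaPrimeTailMajorant α β)
      (t ^ (α - 1) * (1 + t) ^ (-α - β) * (1 + (α + β) * t / (β * t - α) ^ 2)) t :=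
    fun t ht => by
      simpa using (hasDerivAt_betaPrimeTailMajorant (hmem t ht).1 (hmem t ht).2.ne').neg
  have hcont : ContinuousOn (fun t : ℝ => t ^ (α - 1) * (1 + t) ^ (-α - β)) (Icc x R) := by
    fun_prop (disch := intro t ht; have := (hmem t ht).1; positivity)
  have := intervalIntegral.integral_le_sub_of_hasDeriv_right_of_le hxR
    (fun t ht => (hderiv t ht).continuousAt.continuousWithinAt)
    (fun t ht => (hderiv t (Ioo_subset_Icc_self ht)).hasDerivWithinAt) hcont.integrableOn_Icc
    (fun t ht => by
      obtain ⟨ht0, hd⟩ := hmem t (Ioo_subset_Icc_self ht)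
      have : 0 ≤ (α + β) * t / (β * t - α) ^ 2 := by positivity
      exact le_mul_of_one_le_right (by positivity) (by linarith))
  simp only [Pi.neg_apply] at this
  linarith

lemma integral_Ioi_le_betaPrimeTailMajorant (hα : 0 < α) (hβ : 0 < β) {x : ℝ}
    (hαx : α < β * x) :
    ∫ t in Ioi x, t ^ (α - 1) * (1 + t) ^ (-α - β) ≤ betaPrimeTailMajorant α β x := by
  have hx : 0 < x := pos_of_mul_pos_right (hα.trans hαx) hβ.le
  have hint := (integrableOn_Ioi_rpow_mul_one_add_rpow hα hβ).mono_set (Ioi_subset_Ioi hx.le)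
  refine le_of_tendsto (intervalIntegral_tendsto_integral_Ioi x hint tendsto_id) ?_
  filter_upwards [eventually_ge_atTop x] with R hR
  dsimp only [id_eq]
  have hR0 : 0 < R := hx.trans_le hR
  have : 0 ≤ betaPrimeTailMajorant α β R :=
    div_nonneg (by positivity) (by nlinarith)
  linarith [integral_le_betaPrimeTailMajorant_sub hβ.le (by linarith) hx hαx hR]

end BetaPrimeTail

/-- Beta prime tail upper bound `P₀`: for `α, β > 0` and `x > α/β`,
`1 - F(x) ≤ x^α (1+x)^{1-α-β} / (B(α,β)(βx - α))`, where
`f(t) = t^{α-1}(1+t)^{-α-β}/B(α,β)` and `F(x) = ∫₀ˣ f`. -/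
theorem stmt_18 (α β : ℝ) (hα : 0 < α) (hβ : 0 < β) :
    ∀ x : ℝ, α / β < x →
      1 - (∫ t in (0 : ℝ)..x,
            t ^ (α - 1) * (1 + t) ^ (-α - β) /
              (Real.Gamma α * Real.Gamma β / Real.Gamma (α + β)))
        ≤ x ^ α * (1 + x) ^ (1 - α - β) /
            ((Real.Gamma α * Real.Gamma β / Real.Gamma (α + β)) * (β * x - α)) := by
  intro x hx
  have hαx : α < β * x := (div_lt_iff₀' hβ).1 hx
  have hB := beta_pos hα hβ
  change 1 - ∫ t in (0 : ℝ)..x, t ^ (α - 1) * (1 + t) ^ (-α - β) / beta α β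
    ≤ x ^ α * (1 + x) ^ (1 - α - β) / (beta α β * (β * x - α))
  rw [intervalIntegral.integral_div, ← intervalIntegral.integral_Ioi_sub_Ioi
      (integrableOn_Ioi_rpow_mul_one_add_rpow hα hβ) ((div_pos hα hβ).trans hx).le,
    integral_Ioi_rpow_mul_one_add_rpow hα hβ, sub_div, div_self hB.ne', sub_sub_cancel,
    div_mul_eq_div_div_swap]
  exact div_le_div_of_nonneg_right (integral_Ioi_le_betaPrimeTailMajorant hα hβ hαx) hB.le
end

section
/- Let X be a beta prime random variable with parameters α, β > 0, having PDF f(x) = x^{α-1}(1+x)^{-α-β}/B(α,β) and CDF F on (0, ∞). For all x > α/β, 1 - F(x) ≥ x^α (1+x)^{1-α-β} (βx - α) / (B(α,β)(α² + β²x² + x(-2αβ + α + β))). -/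
/-! With `k t = t ^ (α - 1) * (1 + t) ^ (-α - β)` and
`g t = t ^ α * (1 + t) ^ (1 - α - β) * (β * t - α) / Q t`, where
`Q t = (β * t - α) ^ 2 + t * (α + β)`, one computes `g' = k * (S - 1)` with
`S = (α + β) * (α + β * t) * t * (1 + t) / Q ^ 2 ≥ 0`, so `-g' ≤ k` on `(0, ∞)`.
As `g` tends to `0` at infinity, integrating over `(x, ∞)` gives `g x ≤ ∫ t in Ioi x, k t`,
which is `B(α, β) * (1 - F x)`. The normalisation `∫ t in Ioi 0, k t = B(α, β)` follows from the
substitution `t = u / (1 - u)`, which turns `k` into the beta integrand on `(0, 1)`. -/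

open MeasureTheory Set Filter ProbabilityTheory Topology

theorem sub_le_integral_Ioi_of_hasDerivAt_of_neg_le {f g g' : ℝ → ℝ} {a m : ℝ}
    (hcont : ContinuousOn g (Ici a)) (hderiv : ∀ t ∈ Ioi a, HasDerivAt g (g' t) t)
    (hf : IntegrableOn f (Ioi a)) (hle : ∀ t ∈ Ioi a, -f t ≤ g' t)
    (hlim : Tendsto g atTop (𝓝 m)) :
    g a - m ≤ ∫ t in Ioi a, f t := by
  have hfinite : ∀ᶠ b in atTop, g a - g b ≤ ∫ t in a..b, f t := by
    filter_upwards [eventually_ge_atTop a] with b hab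
    have := intervalIntegral.sub_le_integral_of_hasDeriv_right_of_le (g := fun t => -g t) hab
      (hcont.mono Icc_subset_Ici_self).neg
      (fun t ht => (hderiv t ht.1).neg.hasDerivWithinAt)
      ((integrableOn_Icc_iff_integrableOn_Ioc).mpr (hf.mono_set Ioc_subset_Ioi_self))
      (fun t ht => neg_le.mp (hle t ht.1))
    simpa only [neg_sub_neg] using this
  exact le_of_tendsto_of_tendsto (tendsto_const_nhds.sub hlim)
    (intervalIntegral_tendsto_integral_Ioi a hf tendsto_id) hfinite

noncomputable section

namespace BetaPrime

variable {α β : ℝ}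

def kernel (α β t : ℝ) : ℝ := t ^ (α - 1) * (1 + t) ^ (-α - β)

def quadratic (α β t : ℝ) : ℝ := α ^ 2 + β ^ 2 * t ^ 2 + t * (-2 * α * β + α + β)

def tailBound (α β t : ℝ) : ℝ := t ^ α * (1 + t) ^ (1 - α - β) * (β * t - α) / quadratic α β t

theorem quadratic_eq (α β t : ℝ) : quadratic α β t = (β * t - α) ^ 2 + t * (α + β) := by
  unfold quadratic; ring

theorem quadratic_pos (hα : 0 < α) (hβ : 0 < β) {t : ℝ} (ht : 0 < t) : 0 < quadratic α β t := by
  rw [quadratic_eq]; positivity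

theorem intervalIntegral_rpow_mul_one_sub_rpow (hα : 0 < α) (hβ : 0 < β) :
    ∫ u in (0 : ℝ)..1, u ^ (α - 1) * (1 - u) ^ (β - 1) = beta α β := by
  have hcomplex : Complex.betaIntegral α β
      = ((∫ u in (0 : ℝ)..1, u ^ (α - 1) * (1 - u) ^ (β - 1) : ℝ) : ℂ) := by
    rw [Complex.betaIntegral, ← intervalIntegral.integral_ofReal]
    refine intervalIntegral.integral_congr fun u hu => ?_
    rw [uIcc_of_le zero_le_one] at hu
    push_cast
    rw [Complex.ofReal_cpow hu.1, Complex.ofReal_cpow (by linarith [hu.2])]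
    push_cast
    ring_nf
  rw [beta_eq_betaIntegralReal α β hα hβ, hcomplex, Complex.ofReal_re]

theorem kernel_comp_div_one_sub {u : ℝ} (hu : u ∈ Ioo (0 : ℝ) 1) :
    |(1 - u)⁻¹ ^ 2| * kernel α β (u / (1 - u)) = u ^ (α - 1) * (1 - u) ^ (β - 1) := by
  obtain ⟨h0, h1⟩ := hu
  have h1u : 0 < 1 - u := by linarith
  have hsum : 1 + u / (1 - u) = (1 - u)⁻¹ := by field_simp; ring
  have hpow : (1 - u)⁻¹ ^ (-α - β) = (1 - u) ^ (α - 1) * (1 - u) ^ (β - 1) * (1 - u) ^ 2 := by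
    rw [Real.inv_rpow h1u.le, ← Real.rpow_neg h1u.le, ← Real.rpow_add h1u, ← Real.rpow_natCast,
      ← Real.rpow_add h1u]
    ring_nf
  rw [kernel, hsum, hpow, abs_of_pos (by positivity), Real.div_rpow h0.le h1u.le]
  field_simp

theorem integral_Ioi_kernel (hα : 0 < α) (hβ : 0 < β) :
    ∫ t in Ioi 0, kernel α β t = beta α β := by
  have himage : (fun u : ℝ => u / (1 - u)) '' Ioo 0 1 = Ioi 0 := by
    ext t
    constructor
    · rintro ⟨u, ⟨h0, h1⟩, rfl⟩
      exact div_pos h0 (by linarith)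
    · intro (ht : 0 < t)
      refine ⟨t / (1 + t), ⟨by positivity, (div_lt_one (by positivity)).mpr (by linarith)⟩, ?_⟩
      field_simp
      ring
  have hderiv : ∀ u ∈ Ioo (0 : ℝ) 1,
      HasDerivWithinAt (fun u : ℝ => u / (1 - u)) ((1 - u)⁻¹ ^ 2) (Ioo 0 1) u := by
    intro u hu
    have hne : 1 - u ≠ 0 := by linarith [hu.2]
    have h := (hasDerivAt_id u).div ((hasDerivAt_id u).const_sub 1) hne
    simp only [id] at h
    refine (h.congr_deriv ?_).hasDerivWithinAt
    field_simp
    ring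
  have hinj : InjOn (fun u : ℝ => u / (1 - u)) (Ioo 0 1) := by
    intro a ha b hb hab
    have ha' : 1 - a ≠ 0 := by linarith [ha.2]
    have hb' : 1 - b ≠ 0 := by linarith [hb.2]
    field_simp at hab
    linarith
  rw [← himage, integral_image_eq_integral_abs_deriv_smul measurableSet_Ioo hderiv hinj]
  simp_rw [smul_eq_mul]
  rw [setIntegral_congr_fun measurableSet_Ioo fun u hu => kernel_comp_div_one_sub hu,
    ← integral_Ioc_eq_integral_Ioo, ← intervalIntegral.integral_of_le zero_le_one,
    intervalIntegral_rpow_mul_one_sub_rpow hα hβ]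

theorem hasDerivAt_rpow_mul_one_add_rpow {t : ℝ} (ht : 0 < t) :
    HasDerivAt (fun t : ℝ => t ^ α * (1 + t) ^ (1 - α - β))
      (kernel α β t * (α + (1 - β) * t)) t := by
  have h1t : 0 < 1 + t := by linarith
  have hleft := Real.hasDerivAt_rpow_const (p := α) (Or.inl ht.ne')
  have hright := (Real.hasDerivAt_rpow_const (p := 1 - α - β) (Or.inl h1t.ne')).comp t
    ((hasDerivAt_id t).const_add 1)
  refine (hleft.mul hright).congr_deriv ?_
  have e1 : t ^ α = t ^ (α - 1) * t := by
    rw [← Real.rpow_add_one ht.ne']; ring_nf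
  have e2 : (1 + t) ^ (1 - α - β) = (1 + t) ^ (-α - β) * (1 + t) := by
    rw [← Real.rpow_add_one h1t.ne']; ring_nf
  simp only [Function.comp, kernel, e1, e2, show 1 - α - β - 1 = -α - β by ring]
  ring

theorem hasDerivAt_tailBound (hα : 0 < α) (hβ : 0 < β) {t : ℝ} (ht : 0 < t) :
    HasDerivAt (tailBound α β)
      (kernel α β t * ((α + β) * (α + β * t) * (t * (1 + t)) / quadratic α β t ^ 2 - 1)) t := by
  have hQ := quadratic_pos hα hβ ht
  have hquad : HasDerivAt (quadratic α β) (2 * β ^ 2 * t - 2 * α * β + α + β) t := by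
    have := ((hasDerivAt_pow 2 t).const_mul (β ^ 2)).const_add (α ^ 2) |>.add
      ((hasDerivAt_id t).mul_const (-2 * α * β + α + β))
    exact this.congr_deriv (by ring)
  have hlin : HasDerivAt (fun t => β * t - α) β t := by
    simpa using ((hasDerivAt_id t).const_mul β).sub_const α
  have hdiv := ((hasDerivAt_rpow_mul_one_add_rpow (α := α) (β := β) ht).mul hlin).div hquad hQ.ne'
  refine HasDerivAt.congr_deriv (f := tailBound α β) hdiv ?_
  have e : t ^ α * (1 + t) ^ (1 - α - β) = kernel α β t * (t * (1 + t)) := by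
    rw [kernel, mul_mul_mul_comm, ← Real.rpow_add_one ht.ne', ← Real.rpow_add_one (by linarith)]
    ring_nf
  have hQ0 := hQ.ne'
  simp only [Pi.mul_apply]
  rw [e]
  field_simp
  rw [quadratic]
  ring

theorem neg_kernel_le_deriv_tailBound (hα : 0 < α) (hβ : 0 < β) {t : ℝ} (ht : 0 < t) :
    -kernel α β t ≤
      kernel α β t * ((α + β) * (α + β * t) * (t * (1 + t)) / quadratic α β t ^ 2 - 1) := by
  have hk : 0 ≤ kernel α β t := by unfold kernel; positivity
  have hratio : 0 ≤ (α + β) * (α + β * t) * (t * (1 + t)) / quadratic α β t ^ 2 := by positivity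
  nlinarith

theorem tailBound_nonneg (hα : 0 < α) (hβ : 0 < β) {t : ℝ} (ht : 0 < t) (hαt : α ≤ β * t) :
    0 ≤ tailBound α β t := by
  have := quadratic_pos hα hβ ht
  have : 0 ≤ β * t - α := by linarith
  unfold tailBound
  positivity

theorem tailBound_le (hα : 0 < α) (hβ : 0 < β) {t : ℝ} (ht : 1 ≤ t) (hαt : 2 * α ≤ β * t) :
    tailBound α β t ≤ 4 / β * (1 + t) ^ (-β) := by
  have h1t : 0 < 1 + t := by linarith
  have hQ := quadratic_pos hα hβ (by linarith : 0 < t)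
  have hlin : 0 ≤ β * t - α := by linarith
  have hratio : (1 + t) * (β * t - α) / quadratic α β t ≤ 4 / β := by
    rw [div_le_div_iff₀ hQ hβ, quadratic_eq]
    nlinarith [mul_nonneg hlin hlin, mul_nonneg hlin (by linarith : (0 : ℝ) ≤ t - 1)]
  calc tailBound α β t = t ^ α * (1 + t) ^ (1 - α - β) * ((β * t - α) / quadratic α β t) :=
        mul_div_assoc _ _ _
    _ ≤ (1 + t) ^ α * (1 + t) ^ (1 - α - β) * ((β * t - α) / quadratic α β t) := by
        gcongr; linarith
    _ = (1 + t) ^ (-β) * ((1 + t) * (β * t - α) / quadratic α β t) := by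
        rw [← Real.rpow_add h1t, show α + (1 - α - β) = -β + 1 by ring,
          Real.rpow_add_one h1t.ne']
        ring
    _ ≤ (1 + t) ^ (-β) * (4 / β) := by gcongr
    _ = 4 / β * (1 + t) ^ (-β) := mul_comm _ _

theorem tendsto_tailBound_atTop (hα : 0 < α) (hβ : 0 < β) :
    Tendsto (tailBound α β) atTop (𝓝 0) := by
  have hdecay : Tendsto (fun t : ℝ => 4 / β * (1 + t) ^ (-β)) atTop (𝓝 0) := by
    simpa using ((tendsto_rpow_neg_atTop hβ).comp
      (tendsto_atTop_add_const_left _ 1 tendsto_id)).const_mul (4 / β)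
  have hlarge : ∀ᶠ t in atTop, 1 ≤ t ∧ 2 * α ≤ β * t :=
    (eventually_ge_atTop 1).and ((tendsto_id.const_mul_atTop hβ).eventually_ge_atTop (2 * α))
  refine tendsto_of_tendsto_of_tendsto_of_le_of_le' tendsto_const_nhds hdecay ?_ ?_
  · filter_upwards [hlarge] with t ht
    exact tailBound_nonneg hα hβ (by linarith) (by linarith)
  · filter_upwards [hlarge] with t ht
    exact tailBound_le hα hβ ht.1 ht.2

theorem integrableOn_Ioi_kernel (hα : 0 < α) (hβ : 0 < β) :
    IntegrableOn (kernel α β) (Ioi 0) :=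
  Integrable.of_integral_ne_zero <| by
    rw [integral_Ioi_kernel hα hβ]
    exact (beta_pos hα hβ).ne'

theorem tailBound_le_integral_Ioi_kernel (hα : 0 < α) (hβ : 0 < β) {x : ℝ} (hx : 0 < x) :
    tailBound α β x ≤ ∫ t in Ioi x, kernel α β t := by
  simpa using sub_le_integral_Ioi_of_hasDerivAt_of_neg_le
    (fun t ht => (hasDerivAt_tailBound hα hβ (hx.trans_le ht)).continuousAt.continuousWithinAt)
    (fun t ht => hasDerivAt_tailBound hα hβ (hx.trans ht))
    ((integrableOn_Ioi_kernel hα hβ).mono_set (Ioi_subset_Ioi hx.le))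
    (fun t ht => neg_kernel_le_deriv_tailBound hα hβ (hx.trans ht))
    (tendsto_tailBound_atTop hα hβ)

end BetaPrime

end

open BetaPrime

/-- Beta prime tail lower bound `P₁`: for `α, β > 0` and `x > α/β`,
`1 - F(x) ≥ x^α (1+x)^{1-α-β} (βx - α) / (B(α,β)(α² + β²x² + x(-2αβ + α + β)))`,
where `f(t) = t^{α-1}(1+t)^{-α-β}/B(α,β)` and `F(x) = ∫₀ˣ f`. -/
theorem stmt_19 (α β : ℝ) (hα : 0 < α) (hβ : 0 < β) :
    ∀ x : ℝ, α / β < x →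
      1 - (∫ t in (0 : ℝ)..x,
            t ^ (α - 1) * (1 + t) ^ (-α - β) /
              (Real.Gamma α * Real.Gamma β / Real.Gamma (α + β)))
        ≥ x ^ α * (1 + x) ^ (1 - α - β) * (β * x - α) /
            ((Real.Gamma α * Real.Gamma β / Real.Gamma (α + β)) *
              (α ^ 2 + β ^ 2 * x ^ 2 + x * (-2 * α * β + α + β))) := by
  intro x hx
  have hx0 : 0 < x := (div_pos hα hβ).trans hx
  have hB := beta_pos hα hβ
  have htail : ∫ t in (0 : ℝ)..x, kernel α β t = beta α β - ∫ t in Ioi x, kernel α β t := by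
    rw [← intervalIntegral.integral_Ioi_sub_Ioi (integrableOn_Ioi_kernel hα hβ) hx0.le,
      integral_Ioi_kernel hα hβ]
  change x ^ α * (1 + x) ^ (1 - α - β) * (β * x - α) / (beta α β * quadratic α β x)
    ≤ 1 - ∫ t in (0 : ℝ)..x, kernel α β t / beta α β
  rw [intervalIntegral.integral_div, htail, mul_comm (beta α β), ← div_div, one_sub_div hB.ne',
    sub_sub_cancel]
  exact div_le_div_of_nonneg_right (tailBound_le_integral_Ioi_kernel hα hβ hx0) hB.le
end
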